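/- Let G be a graph with no isolated vertex and H a nontrivial graph with γ(H) ≥ 3 and (γ_I(H) ≠ 3 or γ(H) ≠ 3). Then γ_I(G∘H) = γ_{(2,2,2)}(G). -/

import Mathlib

open scoped Classical
open Finset SimpleGraph

/-- A `w`-dominating function: `f : V → {0,…,l}` with `f(N(v)) ≥ w_{f(v)}` for all `v`. -/
def WDom {V : Type*} [Fintype V] (G : SimpleGraph V) {l : ℕ} (w : Fin (l+1) → ℕ)
    (f : V → Fin (l+1)) : Prop :=
  ∀ v, w (f v) ≤ ∑ u, if G.Adj v u then (f u : ℕ) else 0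

/-- The `w`-domination number. -/
noncomputable def gammaW {V : Type*} [Fintype V] (G : SimpleGraph V) {l : ℕ}
    (w : Fin (l+1) → ℕ) : ℕ :=
  sInf {n | ∃ f : V → Fin (l+1), WDom G w f ∧ ∑ v, (f v : ℕ) = n}

/-- The Italian domination number `γ_I = γ_{(2,0,0)}`. -/
noncomputable def gammaI {V : Type*} [Fintype V] (G : SimpleGraph V) : ℕ :=
  gammaW G ![2,0,0]

/-- The domination number. -/
noncomputable def gamma {V : Type*} [Fintype V] (G : SimpleGraph V) : ℕ :=
  sInf {n | ∃ S : Finset V, (∀ v, v ∈ S ∨ ∃ u ∈ S, G.Adj u v) ∧ S.card = n}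

/-- The total domination number. -/
noncomputable def gammaT {V : Type*} [Fintype V] (G : SimpleGraph V) : ℕ :=
  sInf {n | ∃ S : Finset V, (∀ v, ∃ u ∈ S, G.Adj u v) ∧ S.card = n}

/-- The 2-domination number. -/
noncomputable def gamma2 {V : Type*} [Fintype V] (G : SimpleGraph V) : ℕ :=
  sInf {n | ∃ S : Finset V, (∀ v ∉ S, 2 ≤ (S.filter (fun u => G.Adj u v)).card) ∧ S.card = n}

/-- The double domination number. -/
noncomputable def gammaX2 {V : Type*} [Fintype V] (G : SimpleGraph V) : ℕ :=
  sInf {n | ∃ S : Finset V, (∀ v, 2 ≤ (S.filter (fun u => u = v ∨ G.Adj u v)).card) ∧ S.card = n}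

/-- The double total domination number. -/
noncomputable def gammaX2T {V : Type*} [Fintype V] (G : SimpleGraph V) : ℕ :=
  sInf {n | ∃ S : Finset V, (∀ v, 2 ≤ (S.filter (fun u => G.Adj u v)).card) ∧ S.card = n}

/-- The lexicographic product `G ∘ H`. -/
def lexProd {V W : Type*} (G : SimpleGraph V) (H : SimpleGraph W) : SimpleGraph (V × W) where
  Adj x y := G.Adj x.1 y.1 ∨ (x.1 = y.1 ∧ H.Adj x.2 y.2)
  symm := by
    constructor
    rintro x y (h | ⟨h1, h2⟩)
    · exact Or.inl h.symm
    · exact Or.inr ⟨h1.symm, h2.symm⟩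
  loopless := by
    constructor
    rintro x (h | ⟨_, h⟩)
    · exact G.irrefl h
    · exact H.irrefl h

/-!
Spreading a `(2,2,2)`-dominating function of `G` over a single copy `V × {w₀}` gives an Italian
dominating function of `G ∘ H` of the same weight. Conversely, let `f` be an Italian dominating
function of `G ∘ H` and `u x` the weight of `f` on the layer `{x} × W`. If the values `min 2 (u x)`
around `v` sum to at most `1`, the layer over `v` has to dominate itself: it dominates `H` if some
neighbouring layer carries weight, so `u v ≥ γ(H) ≥ 3`, and it is Italian for `H` otherwise, so
`u v ≥ γ_I(H) ≥ 4` (as `γ ≤ γ_I`). Either way `u v + u t ≥ 4` for some neighbour `t` of `v`, which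
pays for putting `2` on `v` and `t`; with `min 2 u` everywhere else this is a `(2,2,2)`-dominating
function of `G` of weight at most `∑ u`.
-/

lemma two_mul_card_union_image_le_sum {α : Type*} [DecidableEq α] (u : α → ℕ) (B : Finset α)
    (r : α → α) (hdisj : Disjoint B (B.image r)) (hr : ∀ v ∈ B, 2 + (2 - u (r v)) ≤ u v) :
    2 * #(B ∪ B.image r) ≤ ∑ v ∈ B ∪ B.image r, u v := by
  have hT : ∑ t ∈ B.image r, (2 - u t) ≤ ∑ v ∈ B, (2 - u (r v)) :=
    sum_image_le_of_nonneg fun _ _ => Nat.zero_le _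
  have hB := sum_le_sum hr
  have hT2 : ∑ t ∈ B.image r, 2 ≤ ∑ t ∈ B.image r, (u t + (2 - u t)) :=
    sum_le_sum fun _ _ => by omega
  rw [sum_add_distrib, sum_const, smul_eq_mul] at hB hT2
  rw [card_union_of_disjoint hdisj, sum_union hdisj]
  omega

section Domination

variable {V W : Type*} [Fintype V] [Fintype W]

section Neighbourhood

variable {G : SimpleGraph V}

lemma le_sum_adj_of_adj (F : V → ℕ) {v x : V} (hx : G.Adj v x) :
    F x ≤ ∑ y, if G.Adj v y then F y else 0 := by
  simpa [hx] using single_le_sum (f := fun y => if G.Adj v y then F y else 0)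
    (fun _ _ => Nat.zero_le _) (mem_univ x)

lemma exists_adj_ne_zero_of_sum_ne_zero {F : V → ℕ} {v : V}
    (h : (∑ y, if G.Adj v y then F y else 0) ≠ 0) : ∃ y, G.Adj v y ∧ F y ≠ 0 := by
  obtain ⟨y, -, hy⟩ := exists_ne_zero_of_sum_ne_zero h
  split_ifs at hy with hvy
  exacts [⟨y, hvy, hy⟩, absurd rfl hy]

end Neighbourhood

section WeightedDomination

variable {G : SimpleGraph V} {l : ℕ} {c : Fin (l + 1) → ℕ}

lemma gammaW_le_sum {f : V → Fin (l + 1)} (hf : WDom G c f) : gammaW G c ≤ ∑ v, (f v : ℕ) :=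
  Nat.sInf_le ⟨f, hf, rfl⟩

lemma exists_wDom_sum_eq_gammaW {f : V → Fin (l + 1)} (hf : WDom G c f) :
    ∃ g, WDom G c g ∧ ∑ v, (g v : ℕ) = gammaW G c :=
  Nat.sInf_mem (s := {n | ∃ g, WDom G c g ∧ ∑ v, (g v : ℕ) = n}) ⟨_, f, hf, rfl⟩

lemma wDom_italian_iff {f : V → Fin 3} :
    WDom G ![2, 0, 0] f ↔ ∀ v, f v = 0 → 2 ≤ ∑ u, if G.Adj v u then (f u : ℕ) else 0 := by
  refine forall_congr' fun v => ?_
  generalize f v = i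
  fin_cases i <;> simp

lemma wDom_222_iff {f : V → Fin 3} :
    WDom G ![2, 2, 2] f ↔ ∀ v, 2 ≤ ∑ u, if G.Adj v u then (f u : ℕ) else 0 := by
  refine forall_congr' fun v => ?_
  generalize f v = i
  fin_cases i <;> rfl

lemma wDom_italian_const_two : WDom G ![2, 0, 0] fun _ => 2 :=
  wDom_italian_iff.2 fun _ h => absurd h (by decide)

lemma wDom_222_const_two (hG : ∀ v, ∃ u, G.Adj v u) : WDom G ![2, 2, 2] fun _ => 2 := by
  refine wDom_222_iff.2 fun v => ?_
  obtain ⟨u, hu⟩ := hG v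
  exact le_sum_adj_of_adj (fun _ => ((2 : Fin 3) : ℕ)) hu

lemma le_one_of_sum_min_two_le_one {u : V → ℕ} {v x : V}
    (hv : (∑ y, if G.Adj v y then min 2 (u y) else 0) ≤ 1) (hx : G.Adj v x) : u x ≤ 1 := by
  have := (le_sum_adj_of_adj (fun y => min 2 (u y)) hx).trans hv
  omega

lemma sum_ite_mem_two_min_two_le_sum (u : V → ℕ) (S : Finset V)
    (hS : 2 * #S ≤ ∑ v ∈ S, u v) :
    ∑ v, (if v ∈ S then 2 else min 2 (u v)) ≤ ∑ v, u v := by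
  rw [← sum_sdiff (subset_univ S), ← sum_sdiff (subset_univ S) (f := u)]
  refine add_le_add (sum_le_sum fun v hv => ?_) ?_
  · simp [(mem_sdiff.1 hv).2]
  · rwa [sum_ite_of_true fun _ h => h, sum_const, smul_eq_mul, mul_comm]

lemma gammaW_222_le_sum (u : V → ℕ)
    (hu : ∀ v, (∑ x, if G.Adj v x then min 2 (u x) else 0) ≤ 1 →
      ∃ t, G.Adj v t ∧ 4 ≤ u v + u t) :
    gammaW G ![2, 2, 2] ≤ ∑ v, u v := by
  set B := univ.filter fun v => (∑ x, if G.Adj v x then min 2 (u x) else 0) ≤ 1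
  choose! r hadj hr using fun v (hv : v ∈ B) => hu v (mem_filter.1 hv).2
  have hlight : ∀ v ∈ B, u (r v) ≤ 1 := fun v hv =>
    le_one_of_sum_min_two_le_one (mem_filter.1 hv).2 (hadj v hv)
  have hdisj : Disjoint B (B.image r) := by
    refine disjoint_right.2 fun t ht htB => ?_
    obtain ⟨v, hv, rfl⟩ := mem_image.1 ht
    have := hr _ htB
    have := hlight _ htB
    have := hlight v hv
    omega
  set S := B ∪ B.image r
  let g : V → Fin 3 := fun v => ⟨if v ∈ S then 2 else min 2 (u v), by split <;> omega⟩
  have hg : WDom G ![2, 2, 2] g := by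
    refine wDom_222_iff.2 fun v => ?_
    by_cases hv : v ∈ B
    · have hrv : r v ∈ S := mem_union_right _ (mem_image_of_mem r hv)
      calc 2 = (g (r v) : ℕ) := by simp [g, hrv]
        _ ≤ _ := le_sum_adj_of_adj (fun x => (g x : ℕ)) (hadj v hv)
    · calc 2 ≤ ∑ x, if G.Adj v x then min 2 (u x) else 0 :=
          Nat.succ_le_of_lt (by simpa [B] using hv)
        _ ≤ _ := sum_le_sum fun x _ => by
          split_ifs
          · simp only [g]
            split <;> omega
          · rfl
  refine (gammaW_le_sum hg).trans (sum_ite_mem_two_min_two_le_sum u S ?_)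
  refine two_mul_card_union_image_le_sum u B r hdisj fun v hv => ?_
  have := hr v hv
  have := hlight v hv
  omega

end WeightedDomination

lemma gamma_le_sum (H : SimpleGraph W) (f : W → ℕ)
    (hf : ∀ w, f w = 0 → 0 < ∑ y, if H.Adj w y then f y else 0) :
    gamma H ≤ ∑ w, f w := by
  set S := univ.filter (f · ≠ 0)
  have hS : ∀ w, w ∈ S ∨ ∃ y ∈ S, H.Adj y w := by
    intro w
    by_cases hw : f w = 0
    · obtain ⟨y, hwy, hy⟩ := exists_adj_ne_zero_of_sum_ne_zero (hf w hw).ne'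
      exact Or.inr ⟨y, by simpa [S] using hy, hwy.symm⟩
    · simp [S, hw]
  calc gamma H ≤ #S := Nat.sInf_le ⟨S, hS, rfl⟩
    _ ≤ ∑ w ∈ S, f w := by
      simpa using card_nsmul_le_sum S f 1 fun w hw =>
        Nat.one_le_iff_ne_zero.2 (mem_filter.1 hw).2
    _ = ∑ w, f w := sum_filter_ne_zero _

lemma gamma_le_gammaI (H : SimpleGraph W) : gamma H ≤ gammaI H := by
  obtain ⟨f, hf, hsum⟩ := exists_wDom_sum_eq_gammaW (wDom_italian_const_two (G := H))
  rw [gammaI, ← hsum]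
  refine gamma_le_sum H _ fun w hw => ?_
  have := wDom_italian_iff.1 hf w (Fin.ext hw)
  omega

lemma lexProd_sum_adj (G : SimpleGraph V) (H : SimpleGraph W) (F : V × W → ℕ) (v : V) (w : W) :
    (∑ p, if (lexProd G H).Adj (v, w) p then F p else 0) =
      (∑ x, if G.Adj v x then ∑ y, F (x, y) else 0) + ∑ y, if H.Adj w y then F (v, y) else 0 := by
  have hsplit : ∀ x y, (if (lexProd G H).Adj (v, w) (x, y) then F (x, y) else 0) =
      (if G.Adj v x then F (x, y) else 0) + if v = x then (if H.Adj w y then F (x, y) else 0)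
        else 0 := by
    intro x y
    by_cases hx : G.Adj v x
    · simp [lexProd, hx, hx.ne]
    · by_cases hvx : v = x <;> simp [lexProd, hx, hvx]
  simp_rw [Fintype.sum_prod_type, hsplit, sum_add_distrib]
  simp [sum_ite_irrel]

section LexProd

variable {G : SimpleGraph V} {H : SimpleGraph W}

lemma gammaI_lexProd_le_sum [Nonempty W] {g : V → Fin 3} (hg : WDom G ![2, 2, 2] g) :
    gammaI (lexProd G H) ≤ ∑ v, (g v : ℕ) := by
  obtain ⟨w₀⟩ := ‹Nonempty W›
  set f : V × W → Fin 3 := fun p => if p.2 = w₀ then g p.1 else 0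
  have hlayer : ∀ x, ∑ y, (f (x, y) : ℕ) = g x := by
    intro x
    simp [f, apply_ite Fin.val]
  have hf : WDom (lexProd G H) ![2, 0, 0] f := by
    refine wDom_italian_iff.2 fun ⟨v, w⟩ _ => ?_
    rw [lexProd_sum_adj]
    simp_rw [hlayer]
    exact (wDom_222_iff.1 hg v).trans (Nat.le_add_right _ _)
  calc gammaI (lexProd G H) ≤ ∑ p, (f p : ℕ) := gammaW_le_sum hf
    _ = ∑ v, (g v : ℕ) := by rw [Fintype.sum_prod_type]; simp_rw [hlayer]

def layerWeight (f : V × W → Fin 3) (x : V) : ℕ :=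
  ∑ y, (f (x, y) : ℕ)

variable {f : V × W → Fin 3}

lemma two_le_of_wDom_lexProd (hf : WDom (lexProd G H) ![2, 0, 0] f) {v : V} {w : W}
    (hvw : f (v, w) = 0) :
    2 ≤ (∑ x, if G.Adj v x then layerWeight f x else 0) +
      ∑ y, if H.Adj w y then (f (v, y) : ℕ) else 0 := by
  have := wDom_italian_iff.1 hf (v, w) hvw
  rwa [lexProd_sum_adj] at this

lemma gamma_le_layerWeight (hf : WDom (lexProd G H) ![2, 0, 0] f) {v : V}
    (hv : (∑ x, if G.Adj v x then layerWeight f x else 0) ≤ 1) :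
    gamma H ≤ layerWeight f v := by
  refine gamma_le_sum H _ fun w hw => ?_
  have := two_le_of_wDom_lexProd hf (Fin.ext hw)
  omega

lemma gammaI_le_layerWeight (hf : WDom (lexProd G H) ![2, 0, 0] f) {v : V}
    (hv : (∑ x, if G.Adj v x then layerWeight f x else 0) = 0) :
    gammaI H ≤ layerWeight f v := by
  refine gammaW_le_sum (wDom_italian_iff.2 fun w hw => ?_)
  have := two_le_of_wDom_lexProd hf hw
  omega

end LexProd

lemma gammaW_222_le_gammaI_lexProd {G : SimpleGraph V} {H : SimpleGraph W}
    (hG : ∀ v, ∃ u, G.Adj v u) (hH : 3 ≤ gamma H) (hHI : 4 ≤ gammaI H) :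
    gammaW G ![2, 2, 2] ≤ gammaI (lexProd G H) := by
  obtain ⟨f, hf, hsum⟩ := exists_wDom_sum_eq_gammaW (wDom_italian_const_two (G := lexProd G H))
  rw [gammaI, ← hsum, Fintype.sum_prod_type]
  refine gammaW_222_le_sum (layerWeight f) fun v hv => ?_
  have hlight : (∑ x, if G.Adj v x then layerWeight f x else 0) ≤ 1 := by
    refine le_of_eq_of_le (sum_congr rfl fun x _ => ?_) hv
    split_ifs with hx
    · have := le_one_of_sum_min_two_le_one hv hx
      omega
    · rfl
  by_cases hzero : (∑ x, if G.Adj v x then layerWeight f x else 0) = 0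
  · obtain ⟨t, ht⟩ := hG v
    have := gammaI_le_layerWeight hf hzero
    exact ⟨t, ht, by omega⟩
  · obtain ⟨s, hadj, hs⟩ := exists_adj_ne_zero_of_sum_ne_zero hzero
    have := gamma_le_layerWeight hf hlight
    exact ⟨s, hadj, by omega⟩

end Domination

theorem italian_lex_of_gamma_ge_three {V W : Type*} [Fintype V] [Fintype W] [Nontrivial W]
    (G : SimpleGraph V) (H : SimpleGraph W)
    (hG : ∀ v, ∃ u, G.Adj v u) (hH : 3 ≤ gamma H)
    (hHI : gammaI H ≠ 3 ∨ gamma H ≠ 3) :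
    gammaI (lexProd G H) = gammaW G ![2,2,2] := by
  have hI : 4 ≤ gammaI H := by
    have := gamma_le_gammaI H
    omega
  refine le_antisymm ?_ (gammaW_222_le_gammaI_lexProd hG hH hI)
  obtain ⟨g, hg, hsum⟩ := exists_wDom_sum_eq_gammaW (wDom_222_const_two hG)
  exact hsum ▸ gammaI_lexProd_le_sum hg
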